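/- Let a, b ∈ (0,∞) and Λ(x) = √(a|x|² + b) on ℝ². Then for any x, y ∈ ℝ², |x − y|/(1 + |x|³ + |y|³) ≲ |∇Λ(x) − ∇Λ(y)| ≲ |x − y|, with implicit constants depending only on a and b. -/

import Mathlib

noncomputable section

open MeasureTheory Complex Filter
open scoped ENNReal FourierTransform RealInnerProductSpace

/-- The plane `ℝ²`. -/
abbrev Plane : Type := EuclideanSpace ℝ (Fin 2)

/-- The Fourier multiplier operator with symbol `m`. -/
def fourierMult (m : Plane → ℂ) (f : Plane → ℂ) : Plane → ℂ :=
  𝓕⁻ fun ξ => m ξ * 𝓕 f ξ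

/-- The symbol `Λ(ξ) = √(a|ξ|² + b)`. -/
def lamSym (a b : ℝ) (ξ : Plane) : ℝ := Real.sqrt (a * ‖ξ‖ ^ 2 + b)

/-- The operator `Λ = √(a|∇|² + b)`. -/
def LamOp (a b : ℝ) : (Plane → ℂ) → Plane → ℂ :=
  fourierMult fun ξ => (lamSym a b ξ : ℂ)

/-- The operator `Λ⁻¹`. -/
def LamInvOp (a b : ℝ) : (Plane → ℂ) → Plane → ℂ :=
  fourierMult fun ξ => ((lamSym a b ξ : ℂ))⁻¹

/-- The operator `|∇|`, with symbol `|ξ|`. -/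
def absNabla : (Plane → ℂ) → Plane → ℂ :=
  fourierMult fun ξ => (‖ξ‖ : ℂ)

/-- The partial derivative `∂_j`, as the Fourier multiplier with symbol `iξ_j`. -/
def partialD (j : Fin 2) : (Plane → ℂ) → Plane → ℂ :=
  fourierMult fun ξ => Complex.I * ((ξ j : ℝ) : ℂ)

/-- The Riesz transform `R_j = ∂_j/|∇|`, with symbol `iξ_j/|ξ|`. -/
def Riesz (j : Fin 2) : (Plane → ℂ) → Plane → ℂ :=
  fourierMult fun ξ => Complex.I * ((ξ j : ℝ) : ℂ) / ((‖ξ‖ : ℝ) : ℂ)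

/-- The linear propagator `e^{itΛ}`. -/
def eitLam (a b t : ℝ) : (Plane → ℂ) → Plane → ℂ :=
  fourierMult fun ξ => Complex.exp (Complex.I * (t : ℂ) * ((lamSym a b ξ : ℝ) : ℂ))

/-- The Laplacian `Δ`, with symbol `-|ξ|²`. -/
def lapOp : (Plane → ℂ) → Plane → ℂ :=
  fourierMult fun ξ => ((-(‖ξ‖ ^ 2) : ℝ) : ℂ)

/-- The derivative `D^α = ∂₁^{α₁}∂₂^{α₂}`, with symbol `(iξ₁)^{α₁}(iξ₂)^{α₂}`. -/
def Dop (α : Fin 2 → ℕ) : (Plane → ℂ) → Plane → ℂ :=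
  fourierMult fun ξ => ∏ j : Fin 2, (Complex.I * ((ξ j : ℝ) : ℂ)) ^ α j

/-- Pointwise complex conjugate of a function. -/
def conjF (f : Plane → ℂ) : Plane → ℂ := fun x => (starRingEnd ℂ) (f x)

/-- The quadratic nonlinearity
`(i/4)Σ_j ΛR_j[|∇|Λ⁻¹(U+Ū)·R_j(U−Ū)] + (i/8)Σ_j |∇|[R_j(U−Ū)·R_j(U−Ū)]`. -/
def nonlin (a b : ℝ) (U : Plane → ℂ) : Plane → ℂ := fun x =>
  Complex.I / 4 *
      ∑ j : Fin 2,
        LamOp a b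
          (Riesz j fun y =>
            absNabla (LamInvOp a b fun z => U z + conjF U z) y *
              Riesz j (fun z => U z - conjF U z) y) x +
    Complex.I / 8 *
      ∑ j : Fin 2,
        absNabla
          (fun y =>
            Riesz j (fun z => U z - conjF U z) y * Riesz j (fun z => U z - conjF U z) y) x

/-- The Sobolev `H^s` norm, defined on the Fourier side. -/
def sobolevNorm (s : ℝ) (f : Plane → ℂ) : ℝ≥0∞ :=
  eLpNorm (fun ξ : Plane => ((1 + ‖ξ‖ ^ 2) ^ (s / 2) : ℝ) • 𝓕 f ξ) 2 volume

/-- `U ∈ C(I : H^s)`. -/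
def ContInSobolev (s : ℝ) (I : Set ℝ) (U : ℝ → Plane → ℂ) : Prop :=
  (∀ t ∈ I, sobolevNorm s (U t) < ⊤) ∧
    ∀ t ∈ I,
      Tendsto (fun τ => sobolevNorm s fun x => U τ x - U t x) (nhdsWithin t I) (nhds 0)

/-- `U` solves `(∂_t + iΛ)U = nonlin(U)` on the time set `I`. -/
def IsSolutionOn (a b : ℝ) (I : Set ℝ) (U : ℝ → Plane → ℂ) : Prop :=
  ∀ t ∈ I, ∀ x : Plane,
    HasDerivWithinAt (fun τ => U τ x)
      (-Complex.I * LamOp a b (U t) x + nonlin a b (U t) x) I t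

/-- `U` solves the parabolic regularization `(∂_t + iΛ - εΔ)U = nonlin(U)` on `I`. -/
def IsRegSolutionOn (a b ε : ℝ) (I : Set ℝ) (U : ℝ → Plane → ℂ) : Prop :=
  ∀ t ∈ I, ∀ x : Plane,
    HasDerivWithinAt (fun τ => U τ x)
      (-Complex.I * LamOp a b (U t) x + (ε : ℂ) * lapOp (U t) x + nonlin a b (U t) x) I t

/-- `U` solves the forced equation `(∂_t + iΛ)U = F + nonlin(U)` on `I`. -/
def IsForcedSolutionOn (a b : ℝ) (I : Set ℝ) (U F : ℝ → Plane → ℂ) : Prop :=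
  ∀ t ∈ I, ∀ x : Plane,
    HasDerivWithinAt (fun τ => U τ x)
      (-Complex.I * LamOp a b (U t) x + nonlin a b (U t) x + F t x) I t

/-- An admissible Littlewood–Paley cutoff: even, smooth, `[0,1]`-valued, supported in
`[-8/5, 8/5]` and equal to `1` on `[-5/4, 5/4]`. -/
structure IsAdmissibleCutoff (φ : ℝ → ℝ) : Prop where
  smooth : ContDiff ℝ (⊤ : ℕ∞) φ
  even : ∀ x, φ (-x) = φ x
  mem_Icc : ∀ x, φ x ∈ Set.Icc (0 : ℝ) 1
  eq_zero : ∀ x : ℝ, 8 / 5 < |x| → φ x = 0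
  eq_one : ∀ x : ℝ, |x| ≤ 5 / 4 → φ x = 1

/-- The dyadic piece `φ_k(r) = φ(|r|/2^k) - φ(|r|/2^{k-1})`. -/
def phiLP (φ : ℝ → ℝ) (k : ℤ) (r : ℝ) : ℝ :=
  φ (|r| / 2 ^ k) - φ (|r| / 2 ^ (k - 1))

/-- `φ_I = Σ_{m ∈ I ∩ ℤ} φ_m` for an interval of integers `[m, n]`. -/
def phiSum (φ : ℝ → ℝ) (m n : ℤ) (r : ℝ) : ℝ :=
  ∑ k ∈ Finset.Icc m n, phiLP φ k r

/-- The Littlewood–Paley projection `P_k`. -/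
def Pk (φ : ℝ → ℝ) (k : ℤ) : (Plane → ℂ) → Plane → ℂ :=
  fourierMult fun ξ => ((phiLP φ k ‖ξ‖ : ℝ) : ℂ)

/-- The `Z` norm. -/
def zNorm (φ : ℝ → ℝ) (f : Plane → ℂ) : ℝ≥0∞ :=
  ⨆ k : ℤ,
    ENNReal.ofReal ((2 : ℝ) ^ ((k : ℝ) / 10) + (2 : ℝ) ^ (10 * (k : ℝ))) *
      (eLpNorm (Pk φ k f) 2 volume +
        ∑' j : ℕ,
          ENNReal.ofReal ((2 : ℝ) ^ (j : ℕ)) *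
            eLpNorm (fun x : Plane => phiLP φ (j : ℤ) ‖x‖ • Pk φ k f x) 2 volume)

/-- The `Y^{N₀}` norm, `‖f‖_{H^{N₀}} + ‖f‖_Z`. -/
def yNorm (φ : ℝ → ℝ) (s : ℝ) (f : Plane → ℂ) : ℝ≥0∞ :=
  sobolevNorm s f + zNorm φ f

/-- The `Z'` norm. -/
def z'Norm (φ : ℝ → ℝ) (f : Plane → ℂ) : ℝ≥0∞ :=
  ⨆ k : ℤ,
    ENNReal.ofReal ((2 : ℝ) ^ ((k : ℝ) / 2) + (2 : ℝ) ^ (2 * (k : ℝ))) *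
      eLpNorm (Pk φ k f) ⊤ volume

/-- The `X^N_T` norm. -/
def xNorm (φ : ℝ → ℝ) (a b N N₀ δ T : ℝ) (U : ℝ → Plane → ℂ) : ℝ≥0∞ :=
  (⨆ t : Set.Icc (0 : ℝ) T,
      ENNReal.ofReal ((1 + (t : ℝ)) ^ (-δ)) * sobolevNorm N (U (t : ℝ))) +
    ⨆ t : Set.Icc (0 : ℝ) T, yNorm φ N₀ (eitLam a b (t : ℝ) (U (t : ℝ)))

/-- Membership in the space `X^N_T`. -/
def MemXNT (φ : ℝ → ℝ) (a b N N₀ δ T : ℝ) (U : ℝ → Plane → ℂ) : Prop :=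
  ContInSobolev N (Set.Icc 0 T) U ∧
    (∀ t ∈ Set.Icc (0 : ℝ) T,
      Tendsto
        (fun τ => yNorm φ N₀ fun x => eitLam a b τ (U τ) x - eitLam a b t (U t) x)
        (nhdsWithin t (Set.Icc 0 T)) (nhds 0)) ∧
    xNorm φ a b N N₀ δ T U < ⊤

/-- Real part of a complex operator applied to (the complexification of) a real function. -/
def opRe (T : (Plane → ℂ) → Plane → ℂ) (g : Plane → ℝ) : Plane → ℝ := fun x =>
  (T (fun y => ((g y : ℝ) : ℂ)) x).re

/-- The energy `E_P` associated with `P = D^α`. -/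
def energyP (a b : ℝ) (α : Fin 2 → ℕ) (U : Plane → ℂ) : ℝ :=
  (∫ x : Plane, Complex.normSq (Dop α U x)) -
    1 / 8 *
      ∑ j : Fin 2,
        ∫ x : Plane,
          (absNabla (LamInvOp a b fun z => U z + conjF U z) x *
              (Riesz j (Dop α fun z => U z - conjF U z) x *
                Riesz j (Dop α fun z => U z - conjF U z) x)).re

/-- The total energy `E_σ = Σ_{|α| ≤ σ} E_P`. -/
def energyE (a b : ℝ) (σ : ℕ) (U : Plane → ℂ) : ℝ :=
  ∑ p ∈ (Finset.range (σ + 1) ×ˢ Finset.range (σ + 1)).filter fun p => p.1 + p.2 ≤ σ,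
    energyP a b ![p.1, p.2] U

/-- The difference energy `E_P^δ` from Lemma 3.2. -/
def energyDelta (a b : ℝ) (α : Fin 2 → ℕ) (U' Uδ : Plane → ℂ) : ℝ :=
  (∫ x : Plane,
      (opRe (Dop α) (fun y => (Uδ y).re) x) ^ 2 + (opRe (Dop α) (fun y => (Uδ y).im) x) ^ 2) +
    ∑ j : Fin 2,
      ∫ x : Plane,
        opRe (fun h => absNabla (LamInvOp a b h)) (fun y => (U' y).re) x *
          (opRe (fun h => Riesz j (Dop α h)) (fun y => (Uδ y).im) x) ^ 2

/-- The difference energy `E^δ_{Id}`. -/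
def energyDeltaId (a b : ℝ) (U' Uδ : Plane → ℂ) : ℝ :=
  (∫ x : Plane, (Uδ x).re ^ 2 + (Uδ x).im ^ 2) +
    ∑ j : Fin 2,
      ∫ x : Plane,
        opRe (fun h => absNabla (LamInvOp a b h)) (fun y => (U' y).re) x *
          (opRe (Riesz j) (fun y => (Uδ y).im) x) ^ 2

/-- The quadratic symbol `m_{++}`. -/
def mpp (a b c₀ : ℝ) (ξ η : Plane) : ℂ :=
  (c₀ : ℂ) * Complex.I *
    (((-(lamSym a b ξ) * ‖ξ - η‖ * ⟪ξ, η⟫) / (4 * lamSym a b (ξ - η) * ‖ξ‖ * ‖η‖) +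
          (-‖ξ‖ * ⟪η, ξ - η⟫) / (8 * ‖η‖ * ‖ξ - η‖) : ℝ) : ℂ)

/-- The quadratic symbol `m_{+-}`. -/
def mpm (a b c₀ : ℝ) (ξ η : Plane) : ℂ :=
  (c₀ : ℂ) * Complex.I *
    (((-(lamSym a b ξ) * ‖η‖ * ⟪ξ, ξ - η⟫) / (4 * lamSym a b η * ‖ξ‖ * ‖ξ - η‖) +
          (lamSym a b ξ * ‖ξ - η‖ * ⟪ξ, η⟫) / (4 * lamSym a b (ξ - η) * ‖ξ‖ * ‖η‖) +
          (‖ξ‖ * ⟪η, ξ - η⟫) / (4 * ‖η‖ * ‖ξ - η‖) : ℝ) : ℂ)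

/-- The quadratic symbol `m_{--}`. -/
def mmm (a b c₀ : ℝ) (ξ η : Plane) : ℂ :=
  (c₀ : ℂ) * Complex.I *
    (((lamSym a b ξ * ‖ξ - η‖ * ⟪ξ, η⟫) / (4 * lamSym a b (ξ - η) * ‖ξ‖ * ‖η‖) +
          (-‖ξ‖ * ⟪η, ξ - η⟫) / (8 * ‖η‖ * ‖ξ - η‖) : ℝ) : ℂ)

/-- `m'_{--}(v,w) = conj(m_{++}(-v,-w))`. -/
def m'mm (a b c₀ : ℝ) (v w : Plane) : ℂ := (starRingEnd ℂ) (mpp a b c₀ (-v) (-w))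

/-- `m'_{-+}(v,w) = conj(m_{+-}(-v,-w))`. -/
def m'mp (a b c₀ : ℝ) (v w : Plane) : ℂ := (starRingEnd ℂ) (mpm a b c₀ (-v) (-w))

/-- `m'_{++}(v,w) = conj(m_{--}(-v,-w))`. -/
def m'pp (a b c₀ : ℝ) (v w : Plane) : ℂ := (starRingEnd ℂ) (mmm a b c₀ (-v) (-w))

/-- The phase `Φ_{++}(ξ,η) = Λ(ξ) - Λ(ξ-η) - Λ(η)`. -/
def PhiPP (a b : ℝ) (ξ η : Plane) : ℝ := lamSym a b ξ - lamSym a b (ξ - η) - lamSym a b η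

/-- The phase `Φ_{+-}(ξ,η) = Λ(ξ) - Λ(ξ-η) + Λ(η)`. -/
def PhiPM (a b : ℝ) (ξ η : Plane) : ℝ := lamSym a b ξ - lamSym a b (ξ - η) + lamSym a b η

/-- The phase `Φ_{--}(ξ,η) = Λ(ξ) + Λ(ξ-η) + Λ(η)`. -/
def PhiMM (a b : ℝ) (ξ η : Plane) : ℝ := lamSym a b ξ + lamSym a b (ξ - η) + lamSym a b η

/-- The cubic symbol `m_{+++}`. -/
def m3ppp (a b c₀ : ℝ) (ξ η χ : Plane) : ℂ :=
  mpp a b c₀ ξ χ * mpp a b c₀ (ξ - χ) (η - χ) / ((PhiPP a b ξ χ : ℝ) : ℂ) +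
    mpp a b c₀ ξ η * mpp a b c₀ η χ / ((PhiPP a b ξ η : ℝ) : ℂ) +
    mpm a b c₀ ξ η * m'pp a b c₀ η χ / ((PhiPM a b ξ η : ℝ) : ℂ)

/-- The cubic symbol `m_{++-}`. -/
def m3ppm (a b c₀ : ℝ) (ξ η χ : Plane) : ℂ :=
  mpp a b c₀ ξ (ξ - η) * mpm a b c₀ η χ / ((PhiPP a b ξ (ξ - η) : ℝ) : ℂ) +
    mpp a b c₀ ξ η * mpm a b c₀ η χ / ((PhiPP a b ξ η : ℝ) : ℂ) +
    mpm a b c₀ ξ χ * mpp a b c₀ (ξ - χ) (η - χ) / ((PhiPM a b ξ χ : ℝ) : ℂ) +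
    mpm a b c₀ ξ η * m'mp a b c₀ η (η - χ) / ((PhiPM a b ξ η : ℝ) : ℂ) +
    mmm a b c₀ ξ χ * m'pp a b c₀ (ξ - χ) (ξ - η) / ((PhiMM a b ξ χ : ℝ) : ℂ) +
    mmm a b c₀ ξ (ξ - χ) * m'pp a b c₀ (ξ - χ) (ξ - η) / ((PhiMM a b ξ (ξ - χ) : ℝ) : ℂ)

/-- The cubic symbol `m_{+--}`. -/
def m3pmm (a b c₀ : ℝ) (ξ η χ : Plane) : ℂ :=
  mpp a b c₀ ξ (ξ - η) * mmm a b c₀ η χ / ((PhiPP a b ξ (ξ - η) : ℝ) : ℂ) +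
    mpp a b c₀ ξ η * mmm a b c₀ η χ / ((PhiPP a b ξ η : ℝ) : ℂ) +
    mpm a b c₀ ξ χ * mpm a b c₀ (ξ - χ) (η - χ) / ((PhiPM a b ξ χ : ℝ) : ℂ) +
    mpm a b c₀ ξ η * m'mm a b c₀ η (η - χ) / ((PhiPM a b ξ η : ℝ) : ℂ) +
    mmm a b c₀ ξ χ * m'mp a b c₀ (ξ - χ) (ξ - η) / ((PhiMM a b ξ χ : ℝ) : ℂ) +
    mmm a b c₀ ξ (ξ - χ) * m'mp a b c₀ (ξ - χ) (ξ - η) / ((PhiMM a b ξ (ξ - χ) : ℝ) : ℂ)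

/-- The cubic symbol `m_{---}`. -/
def m3mmm (a b c₀ : ℝ) (ξ η χ : Plane) : ℂ :=
  mpm a b c₀ ξ χ * mmm a b c₀ (ξ - χ) (η - χ) / ((PhiPM a b ξ χ : ℝ) : ℂ) +
    mmm a b c₀ ξ χ * m'mm a b c₀ (ξ - χ) (η - χ) / ((PhiMM a b ξ χ : ℝ) : ℂ) +
    mmm a b c₀ ξ η * m'mm a b c₀ η χ / ((PhiMM a b ξ η : ℝ) : ℂ)

/-- The normal-form profile `Ŵ(ξ,t)` on the Fourier side. -/
def WhatF (a b c₀ : ℝ) (U : ℝ → Plane → ℂ) (t : ℝ) (ξ : Plane) : ℂ :=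
  Complex.exp (Complex.I * (t : ℂ) * ((lamSym a b ξ : ℝ) : ℂ)) * 𝓕 (U t) ξ +
    Complex.I * Complex.exp (Complex.I * (t : ℂ) * ((lamSym a b ξ : ℝ) : ℂ)) *
      ∫ η : Plane,
        mpp a b c₀ ξ η / ((PhiPP a b ξ η : ℝ) : ℂ) * 𝓕 (U t) (ξ - η) * 𝓕 (U t) η +
          mpm a b c₀ ξ η / ((PhiPM a b ξ η : ℝ) : ℂ) * 𝓕 (U t) (ξ - η) * 𝓕 (conjF (U t)) η +
          mmm a b c₀ ξ η / ((PhiMM a b ξ η : ℝ) : ℂ) * 𝓕 (conjF (U t)) (ξ - η) *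
            𝓕 (conjF (U t)) η

/-!
Write `∇Λ(x) = p(x) x` with `p(x) = a / λ(|x|)`, so that `p(x)|x| = λ'(|x|)`. Then
`|∇Λ(x) - ∇Λ(y)|² = (λ'(|x|) - λ'(|y|))² + 2 p(x) p(y) (|x||y| - x·y)`, and `|x - y|²` splits in
the same way with `|x|, |y|` in place of `λ'(|x|), λ'(|y|)` and `1` in place of `p`. Both terms are
compared separately: the radial one by the mean value theorem, since `λ'' = ab/λ³` takes values
in `[ab/λ(|x| + |y|)³, a/√b]` on `[0, |x| + |y|]`, and the angular one since
`p(x) p(y) ∈ [a²/λ(|x| + |y|)², a²/b]`. Finally `λ(|x| + |y|)³ ≲ 1 + |x|³ + |y|³`.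
-/

section InnerProduct

variable {E : Type*} [NormedAddCommGroup E] [InnerProductSpace ℝ E]

theorem norm_smul_sub_smul_sq (p q : ℝ) (x y : E) :
    ‖p • x - q • y‖ ^ 2 = (p * ‖x‖ - q * ‖y‖) ^ 2 + 2 * (p * q) * (‖x‖ * ‖y‖ - ⟪x, y⟫) := by
  rw [norm_sub_sq_real, norm_smul, norm_smul, real_inner_smul_left, real_inner_smul_right,
    Real.norm_eq_abs, Real.norm_eq_abs, mul_pow, mul_pow, sq_abs, sq_abs]
  ring

theorem norm_sub_sq_eq_sq_sub_add (x y : E) :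
    ‖x - y‖ ^ 2 = (‖x‖ - ‖y‖) ^ 2 + 2 * (‖x‖ * ‖y‖ - ⟪x, y⟫) := by
  simpa using norm_smul_sub_smul_sq 1 1 x y

theorem norm_smul_sub_smul_le {p q M : ℝ} {x y : E} (hM : 0 ≤ M)
    (hrad : |p * ‖x‖ - q * ‖y‖| ≤ M * |‖x‖ - ‖y‖|) (hang : p * q ≤ M ^ 2) :
    ‖p • x - q • y‖ ≤ M * ‖x - y‖ := by
  refine (pow_le_pow_iff_left₀ (norm_nonneg _) (by positivity) two_ne_zero).mp ?_
  have hrad2 : (p * ‖x‖ - q * ‖y‖) ^ 2 ≤ M ^ 2 * (‖x‖ - ‖y‖) ^ 2 := by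
    simpa [mul_pow, sq_abs] using pow_le_pow_left₀ (abs_nonneg _) hrad 2
  have hang2 := mul_le_mul_of_nonneg_right hang (sub_nonneg.2 (real_inner_le_norm x y))
  rw [norm_smul_sub_smul_sq, mul_pow, norm_sub_sq_eq_sq_sub_add]
  linarith

theorem mul_norm_sub_le_norm_smul_sub_smul {p q m : ℝ} {x y : E} (hm : 0 ≤ m)
    (hrad : m * |‖x‖ - ‖y‖| ≤ |p * ‖x‖ - q * ‖y‖|) (hang : m ^ 2 ≤ p * q) :
    m * ‖x - y‖ ≤ ‖p • x - q • y‖ := by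
  refine (pow_le_pow_iff_left₀ (by positivity) (norm_nonneg _) two_ne_zero).mp ?_
  have hrad2 : m ^ 2 * (‖x‖ - ‖y‖) ^ 2 ≤ (p * ‖x‖ - q * ‖y‖) ^ 2 := by
    simpa [mul_pow, sq_abs] using pow_le_pow_left₀ (by positivity) hrad 2
  have hang2 := mul_le_mul_of_nonneg_right hang (sub_nonneg.2 (real_inner_le_norm x y))
  rw [norm_smul_sub_smul_sq, mul_pow, norm_sub_sq_eq_sq_sub_add]
  linarith

end InnerProduct

/-- The radial profile `λ`, so that `lamSym a b ξ = lamProfile a b ‖ξ‖` and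
`λ'(r) = a * r / lamProfile a b r`. -/
def lamProfile (a b r : ℝ) : ℝ := √(a * r ^ 2 + b)

section Profile

variable {a b : ℝ}

theorem sqrt_le_lamProfile (ha : 0 ≤ a) (r : ℝ) : √b ≤ lamProfile a b r :=
  Real.sqrt_le_sqrt (by nlinarith [sq_nonneg r])

theorem lamProfile_pos (ha : 0 ≤ a) (hb : 0 < b) (r : ℝ) : 0 < lamProfile a b r :=
  (Real.sqrt_pos.2 hb).trans_le (sqrt_le_lamProfile ha r)

theorem lamProfile_sq (ha : 0 ≤ a) (hb : 0 ≤ b) (r : ℝ) : lamProfile a b r ^ 2 = a * r ^ 2 + b :=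
  Real.sq_sqrt (by positivity)

theorem lamProfile_le_of_abs_le (ha : 0 ≤ a) {r M : ℝ} (h : |r| ≤ M) :
    lamProfile a b r ≤ lamProfile a b M := by
  have : r ^ 2 ≤ M ^ 2 := by simpa using pow_le_pow_left₀ (abs_nonneg r) h 2
  exact Real.sqrt_le_sqrt (by nlinarith)

theorem hasDerivAt_lamProfile (ha : 0 ≤ a) (hb : 0 < b) (t : ℝ) :
    HasDerivAt (lamProfile a b) (a * t / lamProfile a b t) t := by
  have h : HasDerivAt (lamProfile a b) _ t :=
    (((hasDerivAt_pow 2 t).const_mul a).add_const b).sqrt (by positivity)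
  refine h.congr_deriv ?_
  rw [lamProfile]
  field_simp
  ring

theorem hasDerivAt_lamProfile_deriv (ha : 0 ≤ a) (hb : 0 < b) (t : ℝ) :
    HasDerivAt (fun r => a * r / lamProfile a b r) (a * b / lamProfile a b t ^ 3) t := by
  have hL := lamProfile_pos ha hb t
  refine (((hasDerivAt_id' t).const_mul a).div (hasDerivAt_lamProfile ha hb t)
    hL.ne').congr_deriv ?_
  field_simp
  rw [lamProfile_sq ha hb.le]
  ring

theorem exists_lamProfile_deriv_sub_eq (ha : 0 ≤ a) (hb : 0 < b) (r s : ℝ) :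
    ∃ c, |c| ≤ max |r| |s| ∧
      a * r / lamProfile a b r - a * s / lamProfile a b s =
        a * b / lamProfile a b c ^ 3 * (r - s) := by
  have hderiv := hasDerivAt_lamProfile_deriv ha hb
  have hcont : Continuous fun t => a * t / lamProfile a b t :=
    continuous_iff_continuousAt.2 fun t => (hderiv t).continuousAt
  rcases lt_trichotomy s r with h | rfl | h
  · obtain ⟨c, hc, hslope⟩ := exists_hasDerivAt_eq_slope _ _ h hcont.continuousOn
      fun t _ => hderiv t
    refine ⟨c, max_comm |r| |s| ▸ abs_le_max_abs_abs hc.1.le hc.2.le, ?_⟩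
    rw [hslope, div_mul_cancel₀ _ (sub_ne_zero.2 h.ne')]
  · exact ⟨s, le_max_left _ _, by ring⟩
  · obtain ⟨c, hc, hslope⟩ := exists_hasDerivAt_eq_slope _ _ h hcont.continuousOn
      fun t _ => hderiv t
    refine ⟨c, abs_le_max_abs_abs hc.1.le hc.2.le, ?_⟩
    have : s - r ≠ 0 := sub_ne_zero.2 h.ne'
    rw [hslope]
    field_simp
    ring

theorem abs_lamProfile_deriv_sub_le (ha : 0 ≤ a) (hb : 0 < b) (r s : ℝ) :
    |a * r / lamProfile a b r - a * s / lamProfile a b s| ≤ a / √b * |r - s| := by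
  obtain ⟨c, -, hc⟩ := exists_lamProfile_deriv_sub_eq ha hb r s
  have hsb : 0 < √b := Real.sqrt_pos.2 hb
  have hLc := lamProfile_pos ha hb c
  rw [hc, abs_mul, abs_of_nonneg (by positivity)]
  refine mul_le_mul_of_nonneg_right ?_ (abs_nonneg _)
  calc a * b / lamProfile a b c ^ 3 ≤ a * b / √b ^ 3 := by
        gcongr
        exact sqrt_le_lamProfile ha c
    _ = a / √b := by
        rw [pow_succ, Real.sq_sqrt hb.le]
        field_simp

theorem le_abs_lamProfile_deriv_sub (ha : 0 ≤ a) (hb : 0 < b) {r s M : ℝ} (hr : |r| ≤ M)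
    (hs : |s| ≤ M) :
    a * b / lamProfile a b M ^ 3 * |r - s| ≤
      |a * r / lamProfile a b r - a * s / lamProfile a b s| := by
  obtain ⟨c, hcM, hc⟩ := exists_lamProfile_deriv_sub_eq ha hb r s
  have hLc := lamProfile_pos ha hb c
  have hLM := lamProfile_pos ha hb M
  rw [hc, abs_mul, abs_of_nonneg (a := a * b / _) (by positivity)]
  refine mul_le_mul_of_nonneg_right ?_ (abs_nonneg _)
  gcongr
  exact lamProfile_le_of_abs_le ha (hcM.trans (max_le hr hs))

theorem lamProfile_add_pow_three_le (ha : 0 ≤ a) (hb : 0 ≤ b) {r s : ℝ} (hr : 0 ≤ r)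
    (hs : 0 ≤ s) :
    lamProfile a b (r + s) ^ 3 ≤ 9 * √(a + b) ^ 3 * (1 + r ^ 3 + s ^ 3) := by
  have hlin : lamProfile a b (r + s) ≤ √(a + b) * (1 + r + s) := by
    rw [lamProfile, ← Real.sqrt_sq (by positivity : 0 ≤ 1 + r + s), ← Real.sqrt_mul (by positivity)]
    exact Real.sqrt_le_sqrt (by nlinarith [mul_nonneg hr hs])
  have hcube : (1 + r + s) ^ 3 ≤ 9 * (1 + r ^ 3 + s ^ 3) := by
    nlinarith [mul_nonneg hr hs, sq_nonneg (r - s), sq_nonneg (r - 1), sq_nonneg (s - 1),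
      mul_nonneg (add_nonneg hr hs) (sq_nonneg (r - s)), mul_nonneg hr (sq_nonneg (r - 1)),
      mul_nonneg hs (sq_nonneg (s - 1))]
  calc lamProfile a b (r + s) ^ 3 ≤ (√(a + b) * (1 + r + s)) ^ 3 :=
        pow_le_pow_left₀ (Real.sqrt_nonneg _) hlin 3
    _ = √(a + b) ^ 3 * (1 + r + s) ^ 3 := mul_pow ..
    _ ≤ √(a + b) ^ 3 * (9 * (1 + r ^ 3 + s ^ 3)) := by gcongr
    _ = 9 * √(a + b) ^ 3 * (1 + r ^ 3 + s ^ 3) := by ring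

end Profile

section Gradient

variable {a b : ℝ}

theorem hasFDerivAt_lamSym (ha : 0 ≤ a) (hb : 0 < b) (v : Plane) :
    HasFDerivAt (lamSym a b) (innerSL ℝ ((a / lamSym a b v) • v)) v := by
  have h : HasFDerivAt (lamSym a b) _ v :=
    ((((hasFDerivAt_id v).norm_sq).const_mul a).add_const b).sqrt (by positivity)
  refine h.congr_fderiv ?_
  ext w
  simp [lamSym]
  field_simp

theorem norm_fderiv_lamSym_sub (ha : 0 ≤ a) (hb : 0 < b) (x y : Plane) :
    ‖fderiv ℝ (lamSym a b) x - fderiv ℝ (lamSym a b) y‖ =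
      ‖(a / lamProfile a b ‖x‖) • x - (a / lamProfile a b ‖y‖) • y‖ := by
  rw [(hasFDerivAt_lamSym ha hb x).fderiv, (hasFDerivAt_lamSym ha hb y).fderiv, ← map_sub,
    innerSL_apply_norm]
  rfl

theorem norm_fderiv_lamSym_sub_le (ha : 0 ≤ a) (hb : 0 < b) (x y : Plane) :
    ‖fderiv ℝ (lamSym a b) x - fderiv ℝ (lamSym a b) y‖ ≤ a / √b * ‖x - y‖ := by
  rw [norm_fderiv_lamSym_sub ha hb]
  have hsb : 0 < √b := Real.sqrt_pos.2 hb
  refine norm_smul_sub_smul_le (by positivity) ?_ ?_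
  · simpa only [div_mul_eq_mul_div] using abs_lamProfile_deriv_sub_le ha hb ‖x‖ ‖y‖
  · have hcoef (r : ℝ) : a / lamProfile a b r ≤ a / √b :=
      div_le_div_of_nonneg_left ha hsb (sqrt_le_lamProfile ha r)
    rw [sq]
    exact mul_le_mul (hcoef _) (hcoef _) (div_nonneg ha (lamProfile_pos ha hb _).le) (by positivity)

theorem mul_norm_sub_le_norm_fderiv_lamSym_sub (ha : 0 ≤ a) (hb : 0 < b) (x y : Plane) :
    a * b / lamProfile a b (‖x‖ + ‖y‖) ^ 3 * ‖x - y‖ ≤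
      ‖fderiv ℝ (lamSym a b) x - fderiv ℝ (lamSym a b) y‖ := by
  rw [norm_fderiv_lamSym_sub ha hb]
  set T := lamProfile a b (‖x‖ + ‖y‖)
  have hT : 0 < T := lamProfile_pos ha hb _
  have hbT : b ≤ T ^ 2 := by
    rw [lamProfile_sq ha hb.le]
    exact le_add_of_nonneg_left (by positivity)
  have hxM : |‖x‖| ≤ ‖x‖ + ‖y‖ := (abs_norm x).trans_le (le_add_of_nonneg_right (norm_nonneg y))
  have hyM : |‖y‖| ≤ ‖x‖ + ‖y‖ := (abs_norm y).trans_le (le_add_of_nonneg_left (norm_nonneg x))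
  refine mul_norm_sub_le_norm_smul_sub_smul (by positivity) ?_ ?_
  · simpa only [div_mul_eq_mul_div] using le_abs_lamProfile_deriv_sub ha hb hxM hyM
  · calc (a * b / T ^ 3) ^ 2 = (a / T) ^ 2 * (b / T ^ 2) ^ 2 := by ring
      _ ≤ (a / T) ^ 2 * 1 := by
          gcongr
          exact pow_le_one₀ (by positivity) ((div_le_one (by positivity)).2 hbT)
      _ ≤ a / lamProfile a b ‖x‖ * (a / lamProfile a b ‖y‖) := by
          rw [mul_one, sq]
          have hLx := lamProfile_pos ha hb ‖x‖
          have hLy := lamProfile_pos ha hb ‖y‖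
          gcongr
          · exact lamProfile_le_of_abs_le ha hxM
          · exact lamProfile_le_of_abs_le ha hyM

end Gradient

/-- two-sided bounds for `|∇Λ(x) - ∇Λ(y)|`. -/
theorem lam_grad_diff_bounds (a b : ℝ) (ha : 0 < a) (hb : 0 < b) :
    ∃ C : ℝ, 0 < C ∧
      ∀ x y : Plane,
        ‖x - y‖ / (1 + ‖x‖ ^ 3 + ‖y‖ ^ 3) ≤ C * ‖fderiv ℝ (lamSym a b) x - fderiv ℝ (lamSym a b) y‖ ∧
          ‖fderiv ℝ (lamSym a b) x - fderiv ℝ (lamSym a b) y‖ ≤ C * ‖x - y‖ := by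
  set K := 9 * √(a + b) ^ 3 / (a * b)
  have hK : 0 < K := by positivity
  refine ⟨K + a / √b, by positivity, fun x y => ⟨?_, ?_⟩⟩
  · set D := ‖fderiv ℝ (lamSym a b) x - fderiv ℝ (lamSym a b) y‖
    set T := lamProfile a b (‖x‖ + ‖y‖)
    have hT : 0 < T := lamProfile_pos ha.le hb _
    have hlow : a * b / T ^ 3 * ‖x - y‖ ≤ D := mul_norm_sub_le_norm_fderiv_lamSym_sub ha.le hb x y
    have hT3 : T ^ 3 ≤ 9 * √(a + b) ^ 3 * (1 + ‖x‖ ^ 3 + ‖y‖ ^ 3) :=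
      lamProfile_add_pow_three_le ha.le hb.le (norm_nonneg x) (norm_nonneg y)
    rw [div_le_iff₀ (by positivity)]
    calc ‖x - y‖ = T ^ 3 / (a * b) * (a * b / T ^ 3 * ‖x - y‖) := by field_simp
      _ ≤ 9 * √(a + b) ^ 3 * (1 + ‖x‖ ^ 3 + ‖y‖ ^ 3) / (a * b) * D := by gcongr
      _ = K * D * (1 + ‖x‖ ^ 3 + ‖y‖ ^ 3) := by ring
      _ ≤ (K + a / √b) * D * (1 + ‖x‖ ^ 3 + ‖y‖ ^ 3) := by
          gcongr
          exact le_add_of_nonneg_right (by positivity)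
  · refine (norm_fderiv_lamSym_sub_le ha.le hb x y).trans ?_
    gcongr
    exact le_add_of_nonneg_left hK.le

end
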